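/- Suppose the loss ℓ is (ν², α)-sub-exponential under P_W ⊗ μ for some ν, α > 0, i.e. log ∫ exp(λ·(ℓ − ∫ ℓ d(P_W ⊗ μ))) d(P_W ⊗ μ) ≤ λ²ν²/2 for every λ with |λ| < 1/α. If I(W;Z_i) ≤ ν²/(2α²) for all i ∈ {1,…,n}, then gen ≤ (1/n) ∑_{i=1}^n √(2ν²·I(W;Z_i)); if instead I(W;Z_i) > ν²/(2α²) for all i ∈ {1,…,n}, then gen ≤ ν²/(2α) + (α/n) ∑_{i=1}^n I(W;Z_i). -/

import Mathlib

open MeasureTheory Real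

/-- Real-valued Kullback–Leibler divergence `D(P‖Q)`,
the integral of the log-likelihood ratio with respect to `P`. -/
noncomputable def klReal {α : Type*} [MeasurableSpace α] (P Q : Measure α) : ℝ :=
  ∫ x, llr P Q x ∂P

variable {W Z : Type*} [MeasurableSpace W] [MeasurableSpace Z]

/-- Population risk `L(w) = ∫ ℓ(w,z) dμ(z)`. -/
noncomputable def popRisk (μ : Measure Z) (ℓ : W × Z → ℝ) (w : W) : ℝ :=
  ∫ z, ℓ (w, z) ∂μ

/-- Empirical risk `L̂(w,s) = (1/n) ∑ i, ℓ(w, s i)`. -/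
noncomputable def empRisk (n : ℕ) (ℓ : W × Z → ℝ) (w : W) (s : Fin n → Z) : ℝ :=
  (1 / (n : ℝ)) * ∑ i, ℓ (w, s i)

/-- Expected generalization error `gen = E_P[L(W) − L̂(W,S_n)]`. -/
noncomputable def genErr (μ : Measure Z) (n : ℕ) (P : Measure (W × (Fin n → Z)))
    (ℓ : W × Z → ℝ) : ℝ :=
  ∫ p, (popRisk μ ℓ p.1 - empRisk n ℓ p.1 p.2) ∂P

/-- Expected empirical excess risk `R̂ = E_P[L̂(W,S_n) − L̂(w*,S_n)]`. -/
noncomputable def empExcess (n : ℕ) (P : Measure (W × (Fin n → Z)))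
    (ℓ : W × Z → ℝ) (wstar : W) : ℝ :=
  ∫ p, (empRisk n ℓ p.1 p.2 - empRisk n ℓ wstar p.2) ∂P

/-- Expected excess risk `R = ∫ r d(P_W ⊗ μ)` where `r(w,z) = ℓ(w,z) − ℓ(w*,z)`. -/
noncomputable def excessRisk (μ : Measure Z) {n : ℕ} (P : Measure (W × (Fin n → Z)))
    (ℓ : W × Z → ℝ) (wstar : W) : ℝ :=
  ∫ p, (ℓ p - ℓ (wstar, p.2)) ∂((P.map Prod.fst).prod μ)

/-- Joint law `P_i` of `(W, Z_i)`: the pushforward of `P` under `(w,z) ↦ (w, z_i)`. -/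
noncomputable def jointLaw {n : ℕ} (P : Measure (W × (Fin n → Z))) (i : Fin n) :
    Measure (W × Z) :=
  P.map fun p => (p.1, p.2 i)

/-- Mutual information `I(W;Z_i) = D(P_i ‖ P_W ⊗ μ)`. -/
noncomputable def mutInfo (μ : Measure Z) {n : ℕ} (P : Measure (W × (Fin n → Z)))
    (i : Fin n) : ℝ :=
  klReal (jointLaw P i) ((P.map Prod.fst).prod μ)

/-!
For each sample index `i`, apply the Donsker–Varadhan variational formula to the joint law `P_i`
of `(W, Z_i)` against the independent coupling `P_W ⊗ μ`, with test function `-t (ℓ - E ℓ)`. The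
sub-exponential bound on the cumulant generating function then gives, for `0 ≤ t ≤ 1/α`,
`t (E_{P_W ⊗ μ} ℓ - E_{P_i} ℓ) ≤ I(W;Z_i) + t² ν² / 2` (the endpoint `t = 1/α` by continuity).
Since `gen` is the average of these gaps over `i`, it remains to optimise in `t`: when
`I(W;Z_i) ≤ ν²/(2α²)` the unconstrained optimum is admissible and yields `√(2ν² I(W;Z_i))`;
otherwise take `t = 1/α`.
-/

open Set

section DonskerVaradhan

variable {α : Type*} [MeasurableSpace α] {μ ν : Measure α}

/-- **Donsker–Varadhan**: Gibbs' inequality for `μ` against the tilted measure `ν.tilted f`. -/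
theorem integral_le_klReal_add_log_integral_exp [IsProbabilityMeasure μ] [SigmaFinite ν]
    [NeZero ν] (hμν : μ ≪ ν) (hllr : Integrable (llr μ ν) μ) {f : α → ℝ} (hfμ : Integrable f μ)
    (hfν : Integrable (fun x => exp (f x)) ν) :
    ∫ x, f x ∂μ ≤ klReal μ ν + log (∫ x, exp (f x) ∂ν) := by
  have := isProbabilityMeasure_tilted hfν
  have hgibbs := InformationTheory.integral_llr_add_sub_measure_univ_nonneg
    (hμν.trans (absolutelyContinuous_tilted hfν)) (integrable_llr_tilted_right hμν hfμ hllr hfν)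
  rw [integral_llr_tilted_right hμν hfμ hfν hllr] at hgibbs
  simp only [probReal_univ, add_sub_cancel_right] at hgibbs
  unfold klReal
  linarith

variable [IsProbabilityMeasure μ] [IsProbabilityMeasure ν] {f : α → ℝ} {b σ : ℝ}

theorem mul_integral_sub_le_of_cgf_le (hμν : μ ≪ ν) (hllr : Integrable (llr μ ν) μ)
    (hfμ : Integrable f μ)
    (hexp : ∀ t, |t| < b → Integrable (fun x => exp (t * (f x - ∫ y, f y ∂ν))) ν)
    (hcgf : ∀ t, |t| < b →
      log (∫ x, exp (t * (f x - ∫ y, f y ∂ν)) ∂ν) ≤ t ^ 2 * σ ^ 2 / 2)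
    {t : ℝ} (ht : |t| < b) :
    t * (∫ x, f x ∂ν - ∫ x, f x ∂μ) ≤ klReal μ ν + t ^ 2 * σ ^ 2 / 2 := by
  have hnt : |-t| < b := by rwa [abs_neg]
  have hdv := integral_le_klReal_add_log_integral_exp hμν hllr
    (f := fun x => -t * (f x - ∫ y, f y ∂ν)) ((hfμ.sub (integrable_const _)).const_mul (-t))
    (hexp (-t) hnt)
  have hmean : ∫ x, -t * (f x - ∫ y, f y ∂ν) ∂μ = t * (∫ x, f x ∂ν - ∫ x, f x ∂μ) := by
    rw [integral_const_mul, integral_sub hfμ (integrable_const _), integral_const,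
      probReal_univ, one_smul]
    ring
  have hcgf' := hcgf (-t) hnt
  rw [neg_sq] at hcgf'
  linarith

theorem mul_integral_sub_le_of_cgf_le_of_abs_le (hb : 0 < b) (hμν : μ ≪ ν)
    (hllr : Integrable (llr μ ν) μ) (hfμ : Integrable f μ)
    (hexp : ∀ t, |t| < b → Integrable (fun x => exp (t * (f x - ∫ y, f y ∂ν))) ν)
    (hcgf : ∀ t, |t| < b →
      log (∫ x, exp (t * (f x - ∫ y, f y ∂ν)) ∂ν) ≤ t ^ 2 * σ ^ 2 / 2)
    {t : ℝ} (ht : |t| ≤ b) :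
    t * (∫ x, f x ∂ν - ∫ x, f x ∂μ) ≤ klReal μ ν + t ^ 2 * σ ^ 2 / 2 := by
  have hclosure : t ∈ closure (Ioo (-b) b) := by
    rw [closure_Ioo (by linarith)]
    exact abs_le.mp ht
  refine le_on_closure (f := fun s => s * (∫ x, f x ∂ν - ∫ x, f x ∂μ))
    (g := fun s => klReal μ ν + s ^ 2 * σ ^ 2 / 2) (fun s hs => ?_)
    (by fun_prop) (by fun_prop) hclosure
  exact mul_integral_sub_le_of_cgf_le hμν hllr hfμ hexp hcgf (abs_lt.mpr hs)

end DonskerVaradhan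

theorem le_sqrt_of_forall_mul_le_add_sq {A I σ b : ℝ} (hb : 0 < b) (hI : I ≤ σ ^ 2 * b ^ 2 / 2)
    (h : ∀ t, 0 ≤ t → t ≤ b → t * A ≤ I + t ^ 2 * σ ^ 2 / 2) :
    A ≤ √(2 * σ ^ 2 * I) := by
  rcases le_or_gt A 0 with hA | hA
  · exact hA.trans (sqrt_nonneg _)
  rcases le_or_gt A (b * σ ^ 2) with hAb | hAb
  · -- the minimiser `t = A / σ²` of the right-hand side lies in `[0, b]`
    have hσ : 0 < σ ^ 2 := by nlinarith
    have ht := h (A / σ ^ 2) (by positivity) ((div_le_iff₀ hσ).mpr (by linarith))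
    have hAσ : A / σ ^ 2 * σ ^ 2 = A := div_mul_cancel₀ _ hσ.ne'
    have hsq : A ^ 2 ≤ 2 * σ ^ 2 * I := by
      nlinarith [mul_le_mul_of_nonneg_left ht hσ.le]
    exact (le_abs_self A).trans (abs_le_sqrt hsq)
  · -- at `t = b`, the bound on `I` makes the hypothesis contradict `b σ² < A`
    have := h b hb.le le_rfl
    nlinarith

theorem le_sq_div_add_mul_of_mul_le {A I σ α : ℝ} (hα : 0 < α)
    (h : 1 / α * A ≤ I + (1 / α) ^ 2 * σ ^ 2 / 2) :
    A ≤ σ ^ 2 / (2 * α) + α * I := by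
  rw [← sub_nonneg] at h ⊢
  refine (mul_nonneg hα.le h).trans_eq ?_
  field_simp
  ring

section Generalization

variable {W Z : Type*} [MeasurableSpace W] [MeasurableSpace Z] {μ : Measure Z} {n : ℕ}
  {P : Measure (W × (Fin n → Z))} {ℓ : W × Z → ℝ}

instance isProbabilityMeasure_jointLaw [IsProbabilityMeasure P] (i : Fin n) :
    IsProbabilityMeasure (jointLaw P i) :=
  Measure.isProbabilityMeasure_map (by fun_prop)

theorem integral_jointLaw (hℓ : Measurable ℓ) (i : Fin n) :
    ∫ q, ℓ q ∂(jointLaw P i) = ∫ p, ℓ (p.1, p.2 i) ∂P :=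
  integral_map (by fun_prop) hℓ.aestronglyMeasurable

theorem integrable_jointLaw_iff (hℓ : Measurable ℓ) (i : Fin n) :
    Integrable ℓ (jointLaw P i) ↔ Integrable (fun p => ℓ (p.1, p.2 i)) P :=
  integrable_map_measure hℓ.aestronglyMeasurable (by fun_prop)

variable [SFinite μ]

theorem aestronglyMeasurable_popRisk (hℓ : Measurable ℓ) (ρ : Measure W) :
    AEStronglyMeasurable (popRisk μ ℓ) ρ :=
  hℓ.stronglyMeasurable.integral_prod_right'.aestronglyMeasurable

theorem integrable_popRisk (hℓ : Measurable ℓ) (hint : Integrable ℓ ((P.map Prod.fst).prod μ)) :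
    Integrable (fun p : W × (Fin n → Z) => popRisk μ ℓ p.1) P :=
  (integrable_map_measure (aestronglyMeasurable_popRisk hℓ _) (by fun_prop)).mp
    hint.integral_prod_left

theorem integral_popRisk [IsFiniteMeasure P] (hℓ : Measurable ℓ)
    (hint : Integrable ℓ ((P.map Prod.fst).prod μ)) :
    ∫ p, popRisk μ ℓ p.1 ∂P = ∫ q, ℓ q ∂((P.map Prod.fst).prod μ) := by
  rw [integral_prod _ hint, ← integral_map (by fun_prop) (aestronglyMeasurable_popRisk hℓ _)]
  rfl

theorem genErr_eq_average [IsFiniteMeasure P] (hn : 0 < n) (hℓ : Measurable ℓ)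
    (hint : Integrable ℓ ((P.map Prod.fst).prod μ)) (hinti : ∀ i, Integrable ℓ (jointLaw P i)) :
    genErr μ n P ℓ = (1 / (n : ℝ)) *
      ∑ i, (∫ q, ℓ q ∂((P.map Prod.fst).prod μ) - ∫ q, ℓ q ∂(jointLaw P i)) := by
  have hsample i := (integrable_jointLaw_iff hℓ i).mp (hinti i)
  have hemp : ∫ p, empRisk n ℓ p.1 p.2 ∂P = (1 / (n : ℝ)) * ∑ i, ∫ q, ℓ q ∂(jointLaw P i) := by
    simp only [empRisk, integral_jointLaw hℓ]
    rw [integral_const_mul, integral_finsetSum _ fun i _ => hsample i]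
  have hempInt : Integrable (fun p : W × (Fin n → Z) => empRisk n ℓ p.1 p.2) P :=
    (integrable_finsetSum _ fun i _ => hsample i).const_mul _
  rw [genErr, integral_sub (integrable_popRisk hℓ hint) hempInt, integral_popRisk hℓ hint, hemp,
    Finset.sum_sub_distrib, Finset.sum_const, Finset.card_univ, Fintype.card_fin, nsmul_eq_mul]
  field_simp [(Nat.cast_pos.mpr hn).ne']

end Generalization

theorem subexponential_loss_bound_general
    (μ : Measure Z) [IsProbabilityMeasure μ] (n : ℕ) (hn : 0 < n)
    (P : Measure (W × (Fin n → Z))) [IsProbabilityMeasure P]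
    (ℓ : W × Z → ℝ) (hℓ : Measurable ℓ)
    (hint : Integrable ℓ ((P.map Prod.fst).prod μ))
    (hinti : ∀ i : Fin n, Integrable ℓ (jointLaw P i))
    (hac : ∀ i : Fin n, jointLaw P i ≪ (P.map Prod.fst).prod μ)
    (hIfin : ∀ i : Fin n, Integrable (llr (jointLaw P i) ((P.map Prod.fst).prod μ))
      (jointLaw P i))
    (ν α : ℝ) (hα : 0 < α)
    (hsubInt : ∀ lam : ℝ, |lam| < 1 / α →
      Integrable
        (fun p => Real.exp (lam * (ℓ p - ∫ q, ℓ q ∂((P.map Prod.fst).prod μ))))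
        ((P.map Prod.fst).prod μ))
    (hsub : ∀ lam : ℝ, |lam| < 1 / α →
      Real.log (∫ p, Real.exp (lam * (ℓ p - ∫ q, ℓ q ∂((P.map Prod.fst).prod μ)))
          ∂((P.map Prod.fst).prod μ)) ≤ lam ^ 2 * ν ^ 2 / 2) :
    ((∀ i : Fin n, mutInfo μ P i ≤ ν ^ 2 / (2 * α ^ 2)) →
      genErr μ n P ℓ ≤
        (1 / (n : ℝ)) * ∑ i : Fin n, Real.sqrt (2 * ν ^ 2 * mutInfo μ P i)) ∧
    ((∀ i : Fin n, ν ^ 2 / (2 * α ^ 2) < mutInfo μ P i) →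
      genErr μ n P ℓ ≤
        ν ^ 2 / (2 * α) + (α / (n : ℝ)) * ∑ i : Fin n, mutInfo μ P i) := by
  have hn' : (n : ℝ) ≠ 0 := (Nat.cast_pos.mpr hn).ne'
  have : IsProbabilityMeasure (P.map Prod.fst) := Measure.isProbabilityMeasure_map (by fun_prop)
  have hgap i t (ht : |t| ≤ 1 / α) := mul_integral_sub_le_of_cgf_le_of_abs_le (by positivity)
    (hac i) (hIfin i) (hinti i) hsubInt hsub ht
  rw [genErr_eq_average hn hℓ hint hinti]
  constructor
  · intro hI
    gcongr with i
    refine le_sqrt_of_forall_mul_le_add_sq (b := 1 / α) (by positivity) ?_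
      fun t h0 h1 => hgap i t (abs_le.mpr ⟨by linarith, h1⟩)
    convert hI i using 1
    ring
  · intro _
    calc _ ≤ (1 / (n : ℝ)) * ∑ i, (ν ^ 2 / (2 * α) + α * mutInfo μ P i) := by
          gcongr with i
          exact le_sq_div_add_mul_of_mul_le hα (hgap i _ (abs_of_pos (by positivity)).le)
      _ = _ := by
        rw [Finset.sum_add_distrib, Finset.sum_const, Finset.card_univ, Fintype.card_fin,
          nsmul_eq_mul, ← Finset.mul_sum]
        field_simp

theorem subexponential_loss_bound
    (μ : Measure Z) [IsProbabilityMeasure μ] (n : ℕ) (hn : 0 < n)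
    (P : Measure (W × (Fin n → Z))) [IsProbabilityMeasure P]
    (hmarg : P.map Prod.snd = Measure.pi fun _ : Fin n => μ)
    (ℓ : W × Z → ℝ) (hℓ : Measurable ℓ) (wstar : W)
    (hint : Integrable ℓ ((P.map Prod.fst).prod μ))
    (hinti : ∀ i : Fin n, Integrable ℓ (jointLaw P i))
    (hintw : Integrable (fun z => ℓ (wstar, z)) μ)
    (hac : ∀ i : Fin n, jointLaw P i ≪ (P.map Prod.fst).prod μ)
    (hIfin : ∀ i : Fin n, Integrable (llr (jointLaw P i) ((P.map Prod.fst).prod μ))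
      (jointLaw P i))
    (ν α : ℝ) (hν : 0 < ν) (hα : 0 < α)
    (hsubInt : ∀ lam : ℝ, |lam| < 1 / α →
      Integrable
        (fun p => Real.exp (lam * (ℓ p - ∫ q, ℓ q ∂((P.map Prod.fst).prod μ))))
        ((P.map Prod.fst).prod μ))
    (hsub : ∀ lam : ℝ, |lam| < 1 / α →
      Real.log (∫ p, Real.exp (lam * (ℓ p - ∫ q, ℓ q ∂((P.map Prod.fst).prod μ)))
          ∂((P.map Prod.fst).prod μ)) ≤ lam ^ 2 * ν ^ 2 / 2) :
    ((∀ i : Fin n, mutInfo μ P i ≤ ν ^ 2 / (2 * α ^ 2)) →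
      genErr μ n P ℓ ≤
        (1 / (n : ℝ)) * ∑ i : Fin n, Real.sqrt (2 * ν ^ 2 * mutInfo μ P i)) ∧
    ((∀ i : Fin n, ν ^ 2 / (2 * α ^ 2) < mutInfo μ P i) →
      genErr μ n P ℓ ≤
        ν ^ 2 / (2 * α) + (α / (n : ℝ)) * ∑ i : Fin n, mutInfo μ P i) :=
  subexponential_loss_bound_general μ n hn P ℓ hℓ hint hinti hac hIfin ν α hα hsubInt hsub
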